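/- With the annulus setup and ε(h) → 0, there exists h₀ > 0 such that for any normalized ψ_h ∈ A_r with P_h ψ_h = (E₀+ε(h))ψ_h and any ε > 0 there exist C, d > 0 with ‖ψ_h‖_{L²((R₀,R₂)∖[R₁−ε,R₁+ε])} ≤ C e^{−d/h} for all h ≤ h₀. -/

import Mathlib

/-!
Where the potential `c / r²` exceeds the energy `E` by `δ > 0`, the eigenvalue equation gives
`(ψ'' + ψ'/r) ψ ≥ K ψ²` with `K = δ / (h² c)`. Since `(r (ψ²)')' = 2 r ψ'² + 2 r (ψ'' + ψ'/r) ψ`,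
integrating from the Dirichlet endpoint shows that the mass `F(t)` of `ψ²` between `t` and that
endpoint satisfies `F'' ≥ κ² F` with `κ ∼ √δ / h`, and comparison with `e^{-κ t}` gives
exponential decay of `F`. On `(R₁, R₂)` the whole interval is forbidden because
`cm / R₁² < cp / R₂²`; on `(R₀, R₁)` the potential `cm / r²` decreases to `E₀ = cm / R₁²`, so
`(R₀, R₁ - ε/2)` is forbidden. Since `ε(h) → 0`, a fixed gap holds for all small `h`; for the
remaining `h` the trivial bound `‖ψ‖ ≤ 1` is absorbed into the constant.
-/

open Set Filter Real Topology MeasureTheory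

theorem antitoneOn_mul_exp_of_sq_mul_le_deriv2 {F F' F'' : ℝ → ℝ} {a b κ : ℝ}
    (hF : ∀ x, HasDerivAt F (F' x) x) (hF' : ∀ x, HasDerivAt F' (F'' x) x)
    (hκ : ∀ x ∈ Ioo a b, κ ^ 2 * F x ≤ F'' x) (hFb : F b = 0) (hF'b : F' b = 0) :
    AntitoneOn (fun t => F t * exp (κ * t)) (Icc a b) := by
  have hexp : ∀ c x : ℝ, HasDerivAt (fun t => exp (c * t)) (exp (c * x) * c) x := fun c x => by
    simpa using ((hasDerivAt_id x).const_mul c).exp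
  -- `(F' + κ F) e^{-κt}` is nondecreasing and vanishes at `b`, so `F' + κ F ≤ 0` on `[a, b]`
  have hW : ∀ x, HasDerivAt (fun t => (F' t + κ * F t) * exp (-κ * t))
      ((F'' x - κ ^ 2 * F x) * exp (-κ * x)) x := fun x =>
    (((hF' x).fun_add ((hF x).const_mul κ)).fun_mul (hexp (-κ) x)).congr_deriv (by ring)
  have hWmono : MonotoneOn (fun t => (F' t + κ * F t) * exp (-κ * t)) (Icc a b) :=
    monotoneOn_of_hasDerivWithinAt_nonneg (convex_Icc a b)
      (fun x _ => (hW x).continuousAt.continuousWithinAt) (fun x _ => (hW x).hasDerivWithinAt)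
      fun x hx => by
        rw [interior_Icc] at hx
        exact mul_nonneg (sub_nonneg.2 (hκ x hx)) (exp_pos _).le
  have hW_nonpos : ∀ t ∈ Icc a b, F' t + κ * F t ≤ 0 := fun t ht => by
    have := hWmono ht ⟨ht.1.trans ht.2, le_rfl⟩ ht.2
    simp only [hFb, hF'b, mul_zero, add_zero, zero_mul] at this
    exact nonpos_of_mul_nonpos_left this (exp_pos _)
  have hG : ∀ x, HasDerivAt (fun t => F t * exp (κ * t))
      ((F' x + κ * F x) * exp (κ * x)) x := fun x =>
    ((hF x).fun_mul (hexp κ x)).congr_deriv (by ring)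
  exact antitoneOn_of_hasDerivWithinAt_nonpos (convex_Icc a b)
    (fun x _ => (hG x).continuousAt.continuousWithinAt) (fun x _ => (hG x).hasDerivWithinAt)
    fun x hx => mul_nonpos_of_nonpos_of_nonneg
      (hW_nonpos x (interior_subset hx)) (exp_pos _).le

theorem monotoneOn_mul_exp_neg_of_sq_mul_le_deriv2 {F F' F'' : ℝ → ℝ} {a b κ : ℝ}
    (hF : ∀ x, HasDerivAt F (F' x) x) (hF' : ∀ x, HasDerivAt F' (F'' x) x)
    (hκ : ∀ x ∈ Ioo a b, κ ^ 2 * F x ≤ F'' x) (hFa : F a = 0) (hF'a : F' a = 0) :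
    MonotoneOn (fun t => F t * exp (-κ * t)) (Icc a b) := by
  have hrefl := antitoneOn_mul_exp_of_sq_mul_le_deriv2 (F := fun x => F (-x))
    (F' := fun x => -F' (-x)) (F'' := fun x => F'' (-x)) (a := -b) (b := -a) (κ := κ)
    (fun x => by simpa [Function.comp_def] using (hF (-x)).scomp x (hasDerivAt_neg x))
    (fun x => by simpa [Function.comp_def] using ((hF' (-x)).scomp x (hasDerivAt_neg x)).fun_neg)
    (fun x hx => hκ (-x) ⟨lt_neg_of_lt_neg hx.2, neg_lt_of_neg_lt hx.1⟩)
    (by simpa using hFa) (by simpa using hF'a)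
  intro x hx y hy hxy
  simpa using hrefl ⟨neg_le_neg hy.2, neg_le_neg hy.1⟩ ⟨neg_le_neg hx.2, neg_le_neg hx.1⟩
    (neg_le_neg hxy)

noncomputable def radialLaplacian (ψ : ℝ → ℝ) (r : ℝ) : ℝ := deriv (deriv ψ) r + 1 / r * deriv ψ r

theorem monotoneOn_mul_two_mul_deriv_sub_integral_sq {ψ : ℝ → ℝ} {a b K : ℝ}
    (hψ : Differentiable ℝ ψ) (hψ' : Differentiable ℝ (deriv ψ)) (ha : 0 < a) (hK : 0 ≤ K)
    (hL : ∀ r ∈ Ioo a b, K * ψ r ^ 2 ≤ radialLaplacian ψ r * ψ r) :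
    MonotoneOn (fun r => r * (2 * ψ r * deriv ψ r) - 2 * K * a * ∫ x in a..r, ψ x ^ 2)
      (Icc a b) := by
  have hcont : Continuous fun x => ψ x ^ 2 := hψ.continuous.pow 2
  have hderiv : ∀ r, HasDerivAt
      (fun r => r * (2 * ψ r * deriv ψ r) - 2 * K * a * ∫ x in a..r, ψ x ^ 2)
      (2 * ψ r * deriv ψ r + r * (2 * deriv ψ r ^ 2 + 2 * ψ r * deriv (deriv ψ) r)
        - 2 * K * a * ψ r ^ 2) r := fun r =>
    (((hasDerivAt_id r).fun_mul (((hψ r).hasDerivAt.const_mul 2).fun_mul (hψ' r).hasDerivAt)).sub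
      ((hcont.integral_hasStrictDerivAt a r).hasDerivAt.const_mul (2 * K * a))).congr_deriv
      (by simp only [id]; ring)
  refine monotoneOn_of_hasDerivWithinAt_nonneg (convex_Icc a b)
    (fun x _ => (hderiv x).continuousAt.continuousWithinAt)
    (fun x _ => (hderiv x).hasDerivWithinAt) fun r hr => ?_
  rw [interior_Icc] at hr
  have hr0 : 0 < r := ha.trans hr.1
  have hweight : 2 * K * a * ψ r ^ 2 ≤ 2 * r * (K * ψ r ^ 2) := by
    have := mul_le_mul_of_nonneg_right hr.1.le (mul_nonneg hK (sq_nonneg (ψ r)))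
    linarith
  have hsplit : 2 * ψ r * deriv ψ r + r * (2 * deriv ψ r ^ 2 + 2 * ψ r * deriv (deriv ψ) r) =
      2 * r * deriv ψ r ^ 2 + 2 * r * (radialLaplacian ψ r * ψ r) := by
    unfold radialLaplacian; field_simp; ring
  rw [hsplit]
  linarith [mul_le_mul_of_nonneg_left (hL r hr) (by positivity : (0 : ℝ) ≤ 2 * r),
    mul_nonneg (by positivity : (0 : ℝ) ≤ 2 * r) (sq_nonneg (deriv ψ r))]

theorem integral_sq_le_mul_exp_of_eq_zero_right {ψ : ℝ → ℝ} {a b K κ t : ℝ}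
    (hψ : Differentiable ℝ ψ) (hψ' : Differentiable ℝ (deriv ψ)) (ha : 0 < a) (hK : 0 ≤ K)
    (hκ : κ ^ 2 * b ≤ 2 * K * a) (hL : ∀ r ∈ Ioo a b, K * ψ r ^ 2 ≤ radialLaplacian ψ r * ψ r)
    (hψb : ψ b = 0) (ht : t ∈ Icc a b) :
    ∫ r in t..b, ψ r ^ 2 ≤ (∫ r in a..b, ψ r ^ 2) * exp (-κ * (t - a)) := by
  have hcont : Continuous fun x => ψ x ^ 2 := hψ.continuous.pow 2
  set F : ℝ → ℝ := fun u => ∫ x in u..b, ψ x ^ 2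
  have hF : ∀ x, HasDerivAt F (-ψ x ^ 2) x := fun x =>
    intervalIntegral.integral_hasDerivAt_left (hcont.intervalIntegrable _ _)
      (hcont.stronglyMeasurableAtFilter _ _) hcont.continuousAt
  have hF' : ∀ x, HasDerivAt (fun x => -ψ x ^ 2) (-(2 * ψ x * deriv ψ x)) x := fun x =>
    (((hψ x).hasDerivAt.pow 2).neg).congr_deriv (by ring)
  have hweighted := monotoneOn_mul_two_mul_deriv_sub_integral_sq hψ hψ' ha hK hL
  have hcomp : ∀ x ∈ Ioo a b, κ ^ 2 * F x ≤ -(2 * ψ x * deriv ψ x) := fun x hx => by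
    have hx0 : 0 < x := ha.trans hx.1
    have hFx : 0 ≤ F x := intervalIntegral.integral_nonneg hx.2.le fun _ _ => sq_nonneg _
    have hcmp := hweighted ⟨hx.1.le, hx.2.le⟩ ⟨hx.1.le.trans hx.2.le, le_rfl⟩ hx.2.le
    simp only [hψb, mul_zero, zero_mul] at hcmp
    have hsub : 2 * K * a * ((∫ r in a..b, ψ r ^ 2) - ∫ r in a..x, ψ r ^ 2) = 2 * K * a * F x :=
      congrArg _ (intervalIntegral.integral_interval_sub_left (hcont.intervalIntegrable _ _)
        (hcont.intervalIntegrable _ _))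
    have hxb : κ ^ 2 * x * F x ≤ 2 * K * a * F x :=
      mul_le_mul_of_nonneg_right ((mul_le_mul_of_nonneg_left hx.2.le (sq_nonneg κ)).trans hκ) hFx
    have hprod : (κ ^ 2 * F x + 2 * ψ x * deriv ψ x) * x ≤ 0 := by linarith
    linarith [nonpos_of_mul_nonpos_left hprod hx0]
  have hanti := antitoneOn_mul_exp_of_sq_mul_le_deriv2 hF hF' hcomp
    (intervalIntegral.integral_same) (by simp [hψb])
  have := hanti ⟨le_rfl, ht.1.trans ht.2⟩ ht ht.1
  rw [show -κ * (t - a) = κ * a - κ * t by ring, exp_sub, ← mul_div_assoc,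
    le_div_iff₀ (exp_pos _)]
  exact this

theorem integral_sq_le_mul_exp_of_eq_zero_left {ψ : ℝ → ℝ} {a b K κ t : ℝ}
    (hψ : Differentiable ℝ ψ) (hψ' : Differentiable ℝ (deriv ψ)) (ha : 0 < a) (hK : 0 ≤ K)
    (hκ : κ ^ 2 * b ≤ 2 * K * a) (hL : ∀ r ∈ Ioo a b, K * ψ r ^ 2 ≤ radialLaplacian ψ r * ψ r)
    (hψa : ψ a = 0) (ht : t ∈ Icc a b) :
    ∫ r in a..t, ψ r ^ 2 ≤ (∫ r in a..b, ψ r ^ 2) * exp (-κ * (b - t)) := by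
  have hcont : Continuous fun x => ψ x ^ 2 := hψ.continuous.pow 2
  set F : ℝ → ℝ := fun u => ∫ x in a..u, ψ x ^ 2
  have hF : ∀ x, HasDerivAt F (ψ x ^ 2) x := fun x =>
    (hcont.integral_hasStrictDerivAt a x).hasDerivAt
  have hF' : ∀ x, HasDerivAt (fun x => ψ x ^ 2) (2 * ψ x * deriv ψ x) x := fun x =>
    ((hψ x).hasDerivAt.pow 2).congr_deriv (by ring)
  have hweighted := monotoneOn_mul_two_mul_deriv_sub_integral_sq hψ hψ' ha hK hL
  have hcomp : ∀ x ∈ Ioo a b, κ ^ 2 * F x ≤ 2 * ψ x * deriv ψ x := fun x hx => by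
    have hx0 : 0 < x := ha.trans hx.1
    have hFx : 0 ≤ F x := intervalIntegral.integral_nonneg hx.1.le fun _ _ => sq_nonneg _
    have hcmp := hweighted ⟨le_rfl, hx.1.le.trans hx.2.le⟩ ⟨hx.1.le, hx.2.le⟩ hx.1.le
    simp only [hψa, mul_zero, zero_mul, intervalIntegral.integral_same, sub_zero] at hcmp
    have hxb : κ ^ 2 * x * F x ≤ 2 * K * a * F x :=
      mul_le_mul_of_nonneg_right ((mul_le_mul_of_nonneg_left hx.2.le (sq_nonneg κ)).trans hκ) hFx
    have hprod : (κ ^ 2 * F x - 2 * ψ x * deriv ψ x) * x ≤ 0 := by linarith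
    linarith [nonpos_of_mul_nonpos_left hprod hx0]
  have hmono := monotoneOn_mul_exp_neg_of_sq_mul_le_deriv2 hF hF' hcomp
    (intervalIntegral.integral_same) (by simp [hψa])
  have := hmono ht ⟨ht.1.trans ht.2, le_rfl⟩ ht.2
  rw [show -κ * (b - t) = -κ * b - -κ * t by ring, exp_sub, ← mul_div_assoc,
    le_div_iff₀ (exp_pos _)]
  exact this

theorem mul_sq_le_radialLaplacian_mul {ψ : ℝ → ℝ} {b c h E δ r : ℝ} (hc : 0 < c) (hh : 0 < h)
    (hr : 0 < r) (hrb : r ≤ b)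
    (heq : -(h ^ 2 * c) * radialLaplacian ψ r + c / r ^ 2 * ψ r = E * ψ r)
    (hgap : E + δ ≤ c / b ^ 2) :
    δ / (h ^ 2 * c) * ψ r ^ 2 ≤ radialLaplacian ψ r * ψ r := by
  have hpot : c / b ^ 2 ≤ c / r ^ 2 :=
    div_le_div_of_nonneg_left hc.le (pow_pos hr 2) (pow_le_pow_left₀ hr.le hrb 2)
  have heq' := congrArg (· * ψ r) heq
  have hgap' := mul_le_mul_of_nonneg_right (hgap.trans hpot) (sq_nonneg (ψ r))
  rw [div_mul_eq_mul_div, div_le_iff₀ (by positivity)]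
  linarith

theorem sqrt_div_sq_mul_eq {a b c h δ : ℝ} (hb : 0 < b) (hc : 0 < c) (hh : 0 < h)
    (hδa : 0 ≤ δ * a) : (√(2 * δ * a / (c * b)) / h) ^ 2 * b = 2 * (δ / (h ^ 2 * c)) * a := by
  rw [div_pow, sq_sqrt (div_nonneg (by linarith) (mul_pos hc hb).le)]
  field_simp

theorem integral_sq_le_mul_exp_of_eigen_right {ψ : ℝ → ℝ} {a b c h E δ t : ℝ} (ha : 0 < a)
    (hc : 0 < c) (hh : 0 < h) (hδ : 0 ≤ δ) (hψ : ContDiff ℝ 2 ψ) (hψb : ψ b = 0)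
    (heq : ∀ r ∈ Ioo a b, -(h ^ 2 * c) * radialLaplacian ψ r + c / r ^ 2 * ψ r = E * ψ r)
    (hgap : E + δ ≤ c / b ^ 2) (ht : t ∈ Icc a b) :
    ∫ r in t..b, ψ r ^ 2 ≤
      (∫ r in a..b, ψ r ^ 2) * exp (-√(2 * δ * a / (c * b)) * (t - a) / h) := by
  have hb : 0 < b := ha.trans_le (ht.1.trans ht.2)
  have hL : ∀ r ∈ Ioo a b, δ / (h ^ 2 * c) * ψ r ^ 2 ≤ radialLaplacian ψ r * ψ r := fun r hr =>
    mul_sq_le_radialLaplacian_mul hc hh (ha.trans hr.1) hr.2.le (heq r hr) hgap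
  have := integral_sq_le_mul_exp_of_eq_zero_right (hψ.differentiable (by norm_num))
    ((hψ.deriv' (n := 1)).differentiable (by norm_num)) ha (div_nonneg hδ (by positivity))
    (sqrt_div_sq_mul_eq hb hc hh (mul_nonneg hδ ha.le)).le hL hψb ht
  convert this using 3
  ring

theorem integral_sq_le_mul_exp_of_eigen_left {ψ : ℝ → ℝ} {a b c h E δ t : ℝ} (ha : 0 < a)
    (hc : 0 < c) (hh : 0 < h) (hδ : 0 ≤ δ) (hψ : ContDiff ℝ 2 ψ) (hψa : ψ a = 0)
    (heq : ∀ r ∈ Ioo a b, -(h ^ 2 * c) * radialLaplacian ψ r + c / r ^ 2 * ψ r = E * ψ r)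
    (hgap : E + δ ≤ c / b ^ 2) (ht : t ∈ Icc a b) :
    ∫ r in a..t, ψ r ^ 2 ≤
      (∫ r in a..b, ψ r ^ 2) * exp (-√(2 * δ * a / (c * b)) * (b - t) / h) := by
  have hb : 0 < b := ha.trans_le (ht.1.trans ht.2)
  have hL : ∀ r ∈ Ioo a b, δ / (h ^ 2 * c) * ψ r ^ 2 ≤ radialLaplacian ψ r * ψ r := fun r hr =>
    mul_sq_le_radialLaplacian_mul hc hh (ha.trans hr.1) hr.2.le (heq r hr) hgap
  have := integral_sq_le_mul_exp_of_eq_zero_left (hψ.differentiable (by norm_num))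
    ((hψ.deriv' (n := 1)).differentiable (by norm_num)) ha (div_nonneg hδ (by positivity))
    (sqrt_div_sq_mul_eq hb hc hh (mul_nonneg hδ ha.le)).le hL hψa ht
  convert this using 3
  ring

theorem integral_le_integral_of_le_right {f : ℝ → ℝ} {a c c' : ℝ} (hf : Continuous f)
    (hnn : ∀ x, 0 ≤ f x) (hc : c ≤ c') : ∫ x in a..c, f x ≤ ∫ x in a..c', f x := by
  have := intervalIntegral.integral_interval_sub_left (hf.intervalIntegrable (μ := volume) a c')
    (hf.intervalIntegrable a c)
  linarith [intervalIntegral.integral_nonneg (μ := volume) hc fun x _ => hnn x]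

theorem integral_le_integral_of_le_left {f : ℝ → ℝ} {b c c' : ℝ} (hf : Continuous f)
    (hnn : ∀ x, 0 ≤ f x) (hc : c' ≤ c) : ∫ x in c..b, f x ≤ ∫ x in c'..b, f x := by
  have := intervalIntegral.integral_add_adjacent_intervals
    (hf.intervalIntegrable (μ := volume) c' c) (hf.intervalIntegrable c b)
  linarith [intervalIntegral.integral_nonneg (μ := volume) hc fun x _ => hnn x]

theorem exists_forall_Ioc_lt_of_tendsto {E : ℝ → ℝ} {x E₀ E₁ : ℝ}
    (hE : Tendsto E (𝓝[>] x) (𝓝 E₀)) (hE₁ : E₀ < E₁) : ∃ u > x, ∀ h ∈ Ioc x u, E h < E₁ := by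
  obtain ⟨u, hu, hsub⟩ := mem_nhdsGT_iff_exists_Ioc_subset.mp (hE (Iio_mem_nhds hE₁))
  exact ⟨u, hu, fun h hh => hsub hh⟩

theorem exists_integral_sq_le_exp_right {E : ℝ → ℝ} {a b c E₀ ε : ℝ} (ha : 0 < a)
    (hab : a < b) (hc : 0 < c) (hE₀ : E₀ < c / b ^ 2) (hE : Tendsto E (𝓝[>] 0) (𝓝 E₀))
    (hε : 0 < ε) :
    ∃ d > 0, ∃ h₁ > 0, ∀ h ∈ Ioc 0 h₁, ∀ ψ : ℝ → ℝ, ContDiff ℝ 2 ψ → ψ b = 0 →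
      (∀ r ∈ Ioo a b, -(h ^ 2 * c) * radialLaplacian ψ r + c / r ^ 2 * ψ r = E h * ψ r) →
      ∫ r in (a + ε)..b, ψ r ^ 2 ≤ (∫ r in a..b, ψ r ^ 2) * exp (-d / h) := by
  obtain ⟨δ, hδ, hgap⟩ : ∃ δ > 0, E₀ + δ < c / b ^ 2 - δ :=
    ⟨(c / b ^ 2 - E₀) / 3, by linarith, by linarith⟩
  obtain ⟨h₁, hh₁, hEh⟩ := exists_forall_Ioc_lt_of_tendsto hE (lt_add_of_pos_right E₀ hδ)
  set ε' := min ε (b - a)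
  have hε' : 0 < ε' := lt_min hε (sub_pos.2 hab)
  have hrate : 0 < √(2 * δ * a / (c * b)) :=
    sqrt_pos.2 (div_pos (by positivity) (mul_pos hc (ha.trans hab)))
  refine ⟨√(2 * δ * a / (c * b)) * ε', mul_pos hrate hε', h₁, hh₁,
    fun h hh ψ hψ hψb heq => ?_⟩
  calc ∫ r in (a + ε)..b, ψ r ^ 2 ≤ ∫ r in (a + ε')..b, ψ r ^ 2 :=
        integral_le_integral_of_le_left (hψ.continuous.pow 2) (fun _ => sq_nonneg _)
          (by linarith [min_le_left ε (b - a)])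
    _ ≤ _ := integral_sq_le_mul_exp_of_eigen_right ha hc hh.1 hδ.le hψ hψb heq
        (by linarith [hEh h hh]) ⟨by linarith, by linarith [min_le_right ε (b - a)]⟩
    _ = _ := by ring_nf

theorem exists_integral_sq_le_exp_left {E : ℝ → ℝ} {a b c E₀ ε : ℝ} (ha : 0 < a)
    (hab : a < b) (hc : 0 < c) (hE₀ : E₀ ≤ c / b ^ 2) (hE : Tendsto E (𝓝[>] 0) (𝓝 E₀))
    (hε : 0 < ε) :
    ∃ d > 0, ∃ h₁ > 0, ∀ h ∈ Ioc 0 h₁, ∀ ψ : ℝ → ℝ, ContDiff ℝ 2 ψ → ψ a = 0 →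
      (∀ r ∈ Ioo a b, -(h ^ 2 * c) * radialLaplacian ψ r + c / r ^ 2 * ψ r = E h * ψ r) →
      ∫ r in a..(b - ε), ψ r ^ 2 ≤ (∫ r in a..b, ψ r ^ 2) * exp (-d / h) := by
  set ε' := min ε (b - a)
  have hε' : 0 < ε' := lt_min hε (sub_pos.2 hab)
  have hε'ε : ε' ≤ ε := min_le_left _ _
  have hε'ab : ε' ≤ b - a := min_le_right _ _
  set b' := b - ε' / 2 with hb'_def
  have hab' : a < b' := by linarith
  have hb'b : b' < b := by linarith
  have hb' : 0 < b' := ha.trans hab'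
  obtain ⟨δ, hδ, hgap⟩ : ∃ δ > 0, E₀ + δ < c / b' ^ 2 - δ := by
    have : c / b ^ 2 < c / b' ^ 2 :=
      div_lt_div_of_pos_left hc (pow_pos hb' 2) (pow_lt_pow_left₀ hb'b hb'.le two_ne_zero)
    exact ⟨(c / b' ^ 2 - E₀) / 3, by linarith, by linarith⟩
  obtain ⟨h₁, hh₁, hEh⟩ := exists_forall_Ioc_lt_of_tendsto hE (lt_add_of_pos_right E₀ hδ)
  refine ⟨√(2 * δ * a / (c * b')) * (ε' / 2),
    mul_pos (sqrt_pos.2 (div_pos (by positivity) (by positivity))) (half_pos hε'), h₁, hh₁,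
    fun h hh ψ hψ hψa heq => ?_⟩
  have hcont : Continuous fun r => ψ r ^ 2 := hψ.continuous.pow 2
  calc ∫ r in a..(b - ε), ψ r ^ 2 ≤ ∫ r in a..(b - ε'), ψ r ^ 2 :=
        integral_le_integral_of_le_right hcont (fun _ => sq_nonneg _) (by linarith)
    _ ≤ (∫ r in a..b', ψ r ^ 2) * exp (-√(2 * δ * a / (c * b')) * (b' - (b - ε')) / h) :=
        integral_sq_le_mul_exp_of_eigen_left ha hc hh.1 hδ.le hψ hψa
          (fun r hr => heq r ⟨hr.1, hr.2.trans hb'b⟩) (by linarith [hEh h hh])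
          ⟨by linarith, by linarith⟩
    _ ≤ _ := by
        refine mul_le_mul (integral_le_integral_of_le_right hcont (fun _ => sq_nonneg _)
          hb'b.le) (le_of_eq (by rw [hb'_def]; ring_nf)) (exp_pos _).le
          (intervalIntegral.integral_nonneg hab.le fun _ _ => sq_nonneg _)

theorem sqrt_le_exp_mul_exp {s h h₁ d : ℝ} (hh₁ : 0 < h₁) (hd : 0 ≤ d)
    (hs : s ≤ 1) (hsmall : h ≤ h₁ → s ≤ exp (-d / h) ^ 2) :
    √s ≤ exp (d / h₁) * exp (-d / h) := by
  rcases le_or_gt h h₁ with hle | hlt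
  · calc √s ≤ exp (-d / h) := sqrt_le_iff.2 ⟨(exp_pos _).le, hsmall hle⟩
      _ ≤ exp (d / h₁) * exp (-d / h) :=
        le_mul_of_one_le_left (exp_pos _).le (one_le_exp (by positivity))
  · calc √s ≤ 1 := sqrt_le_one.2 hs
      _ ≤ exp (d / h₁) * exp (-d / h) := by
        rw [← exp_add, neg_div]
        exact one_le_exp (sub_nonneg.2 (div_le_div_of_nonneg_left hd hh₁ hlt.le))

theorem exp_neg_div_le_exp_neg_div_sq {d d' h : ℝ} (hh : 0 < h) (hd : 2 * d ≤ d') :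
    exp (-d' / h) ≤ exp (-d / h) ^ 2 := by
  rw [sq, ← exp_add, ← add_div]
  exact exp_le_exp.2 (div_le_div_of_nonneg_right (by linarith) hh.le)

theorem stmt_15_general (R₀ R₁ R₂ cm cp : ℝ)
    (hR₀ : 0 < R₀) (hR₀₁ : R₀ < R₁) (hR₁₂ : R₁ < R₂)
    (hcm : 0 < cm)
    (hjump : cm / R₁ ^ 2 < cp / R₂ ^ 2)
    (εfn : ℝ → ℝ) (hεfn : Tendsto εfn (nhdsWithin 0 (Ioi 0)) (nhds 0)) :
    ∃ h₀ > 0, ∀ ε > 0, ∃ C > 0, ∃ d > 0, ∀ h ∈ Ioc (0 : ℝ) h₀, ∀ ψm ψp : ℝ → ℝ,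
      ContDiff ℝ 2 ψm → ContDiff ℝ 2 ψp →
      ψm R₀ = 0 → ψp R₂ = 0 → ψm R₁ = ψp R₁ →
      cp * deriv ψm R₁ = cm * deriv ψp R₁ →
      (∀ r ∈ Ioo R₀ R₁,
        -(h ^ 2 * cm) * (deriv (deriv ψm) r + (1 / r) * deriv ψm r) +
          (cm / r ^ 2) * ψm r = (cm / R₁ ^ 2 + εfn h) * ψm r) →
      (∀ r ∈ Ioo R₁ R₂,
        -(h ^ 2 * cp) * (deriv (deriv ψp) r + (1 / r) * deriv ψp r) +
          (cp / r ^ 2) * ψp r = (cm / R₁ ^ 2 + εfn h) * ψp r) →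
      (∫ r in R₀..R₁, (ψm r) ^ 2) + (∫ r in R₁..R₂, (ψp r) ^ 2) = 1 →
      Real.sqrt ((∫ r in R₀..(R₁ - ε), (ψm r) ^ 2) +
          (∫ r in (R₁ + ε)..R₂, (ψp r) ^ 2)) ≤ C * Real.exp (-d / h) := by
  have hR₁ : 0 < R₁ := hR₀.trans hR₀₁
  have hcp : 0 < cp := (div_pos_iff_of_pos_right (pow_pos (hR₁.trans hR₁₂) 2)).1
    ((div_pos hcm (pow_pos hR₁ 2)).trans hjump)
  have hE : Tendsto (fun h => cm / R₁ ^ 2 + εfn h) (𝓝[>] 0) (𝓝 (cm / R₁ ^ 2)) := by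
    simpa using hεfn.const_add (cm / R₁ ^ 2)
  refine ⟨1, one_pos, fun ε hε => ?_⟩
  obtain ⟨dm, hdm, ηm, hηm, hdecm⟩ := exists_integral_sq_le_exp_left hR₀ hR₀₁ hcm le_rfl hE hε
  obtain ⟨dp, hdp, ηp, hηp, hdecp⟩ := exists_integral_sq_le_exp_right hR₁ hR₁₂ hcp hjump hE hε
  obtain ⟨d, hd, hdm', hdp'⟩ : ∃ d > 0, 2 * d ≤ dm ∧ 2 * d ≤ dp :=
    ⟨min dm dp / 2, half_pos (lt_min hdm hdp), by linarith [min_le_left dm dp],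
      by linarith [min_le_right dm dp]⟩
  refine ⟨exp (d / min ηm ηp), exp_pos _, d, hd, fun h hh ψm ψp hψm hψp hψm0 hψp0 _ _ heqm heqp
    hnorm => sqrt_le_exp_mul_exp (lt_min hηm hηp) hd.le ?_ fun hle => ?_⟩
  · have hIm : ∫ r in R₀..(R₁ - ε), ψm r ^ 2 ≤ ∫ r in R₀..R₁, ψm r ^ 2 :=
      integral_le_integral_of_le_right (hψm.continuous.pow 2) (fun _ => sq_nonneg _) (by linarith)
    have hIp : ∫ r in (R₁ + ε)..R₂, ψp r ^ 2 ≤ ∫ r in R₁..R₂, ψp r ^ 2 :=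
      integral_le_integral_of_le_left (hψp.continuous.pow 2) (fun _ => sq_nonneg _) (by linarith)
    linarith
  have hm' := hdecm h ⟨hh.1, hle.trans (min_le_left _ _)⟩ ψm hψm hψm0 heqm
  have hp' := hdecp h ⟨hh.1, hle.trans (min_le_right _ _)⟩ ψp hψp hψp0 heqp
  calc _ ≤ (∫ r in R₀..R₁, ψm r ^ 2) * exp (-d / h) ^ 2 +
        (∫ r in R₁..R₂, ψp r ^ 2) * exp (-d / h) ^ 2 := add_le_add
          (hm'.trans (mul_le_mul_of_nonneg_left (exp_neg_div_le_exp_neg_div_sq hh.1 hdm')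
            (intervalIntegral.integral_nonneg hR₀₁.le fun _ _ => sq_nonneg _)))
          (hp'.trans (mul_le_mul_of_nonneg_left (exp_neg_div_le_exp_neg_div_sq hh.1 hdp')
            (intervalIntegral.integral_nonneg hR₁₂.le fun _ _ => sq_nonneg _)))
    _ = exp (-d / h) ^ 2 := by rw [← add_mul, hnorm, one_mul]

/-- Exponential concentration near the interface: a normalized eigenfunction of
`P_h` with eigenvalue `E₀ + ε(h)` is `O(e^{−d/h})` in `L²` away from `R₁`. -/
theorem stmt_15 (R₀ R₁ R₂ cm cp : ℝ)
    (hR₀ : 0 < R₀) (hR₀₁ : R₀ < R₁) (hR₁₂ : R₁ < R₂)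
    (hcm : 0 < cm) (hcmp : cm < cp)
    (hjump : cm / R₁ ^ 2 < cp / R₂ ^ 2)
    (εfn : ℝ → ℝ) (hεfn : Tendsto εfn (nhdsWithin 0 (Ioi 0)) (nhds 0)) :
    ∃ h₀ > 0, ∀ ε > 0, ∃ C > 0, ∃ d > 0, ∀ h ∈ Ioc (0 : ℝ) h₀, ∀ ψm ψp : ℝ → ℝ,
      ContDiff ℝ 2 ψm → ContDiff ℝ 2 ψp →
      ψm R₀ = 0 → ψp R₂ = 0 → ψm R₁ = ψp R₁ →
      cp * deriv ψm R₁ = cm * deriv ψp R₁ →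
      (∀ r ∈ Ioo R₀ R₁,
        -(h ^ 2 * cm) * (deriv (deriv ψm) r + (1 / r) * deriv ψm r) +
          (cm / r ^ 2) * ψm r = (cm / R₁ ^ 2 + εfn h) * ψm r) →
      (∀ r ∈ Ioo R₁ R₂,
        -(h ^ 2 * cp) * (deriv (deriv ψp) r + (1 / r) * deriv ψp r) +
          (cp / r ^ 2) * ψp r = (cm / R₁ ^ 2 + εfn h) * ψp r) →
      (∫ r in R₀..R₁, (ψm r) ^ 2) + (∫ r in R₁..R₂, (ψp r) ^ 2) = 1 →
      Real.sqrt ((∫ r in R₀..(R₁ - ε), (ψm r) ^ 2) +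
          (∫ r in (R₁ + ε)..R₂, (ψp r) ^ 2)) ≤ C * Real.exp (-d / h) :=
  stmt_15_general R₀ R₁ R₂ cm cp hR₀ hR₀₁ hR₁₂ hcm hjump εfn hεfn
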